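/- For any nonempty compact metric spaces X and Y, there exist isometric embeddings Φ : X → ℓ^∞(ℝ) and Ψ : Y → ℓ^∞(ℝ) such that the Gromov-Hausdorff distance between X and Y equals the Hausdorff distance between the range of Φ and the range of Ψ. -/

import Mathlib

open Set Metric ENNReal GromovHausdorff

theorem ghDist_eq_hausdorffDist_in_linfty (X : Type*) [MetricSpace X] [CompactSpace X]
    [Nonempty X] (Y : Type*) [MetricSpace Y] [CompactSpace Y] [Nonempty Y] :
    ∃ Φ : X → lp (fun _ : ℕ => ℝ) ∞, ∃ Ψ : Y → lp (fun _ : ℕ => ℝ) ∞,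
      Isometry Φ ∧ Isometry Ψ ∧ ghDist X Y = hausdorffDist (range Φ) (range Ψ) :=
  GromovHausdorff.ghDist_eq_hausdorffDist X Y
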